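/- arXiv:2101.07838 — 2 statements merged into one kernel-verified Lean document; each statement's English description precedes it below -/
import Mathlib

section
/- Let G be a finite group. Every CD-subgroup of G is subnormal in G. -/
open Pointwise

/-- The Chermak–Delgado index-measure of a subgroup `H` of `G`:
`m(G,H) = |G:H| * |G:C_G(H)|`. -/
noncomputable def cdMeasure {G : Type*} [Group G] (H : Subgroup G) : ℕ :=
  H.index * (Subgroup.centralizer (H : Set G)).index

/-- `μ(G)`, the minimum of `m(G,H)` over all subgroups `H ≤ G`. -/
noncomputable def cdMu (G : Type*) [Group G] : ℕ :=
  sInf {n : ℕ | ∃ H : Subgroup G, cdMeasure H = n}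

/-- A subgroup `H ≤ G` is a CD-subgroup if `m(G,H) = μ(G)`. -/
def IsCDSubgroup {G : Type*} [Group G] (H : Subgroup G) : Prop :=
  cdMeasure H = cdMu G

/-- `H` is subnormal in `G`: there is a chain `H = H_0 ⊴ H_1 ⊴ ⋯ ⊴ H_k = G`,
each normal in the next. -/
def IsSubnormal {G : Type*} [Group G] (H : Subgroup G) : Prop :=
  ∃ k : ℕ, ∃ c : ℕ → Subgroup G, c 0 = H ∧ c k = ⊤ ∧
    ∀ i < k, c i ≤ c (i + 1) ∧ c (i + 1) ≤ Subgroup.normalizer (c i : Set G)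

/-!
For finite `G`, `cdMeasure H * (|H| * |C_G(H)|) = |G|²`, so the CD-subgroups are the maximizers
of `|H| * |C_G(H)|`. The maximizers are closed under centralizers, conjugation and joins, and the
join of two maximizers `A`, `B` is the product set `A * B`: this comes from
`|A * B| * |A ⊓ B| = |A| * |B|` together with `C(A) * C(B) ⊆ C(A ⊓ B)`.

Induct on `|G|` and, downwards, on `H`. If `C_G(H) ≰ H`, then `H ⊔ C_G(H)` is a larger
maximizer normalizing `H`. If `C_G(H) ≤ H` and some conjugate `H^g` differs from `H`, then
`J = H ⊔ H^g` is a larger maximizer, proper because `J = H * H^g` and no group is the product of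
two distinct conjugate subgroups; `H` is still a maximizer inside `J` (all of `C_G(H)` lies in
`J`), so `H` is subnormal in `J`, which is subnormal in `G`.
-/

namespace Subgroup

variable {G : Type*} [Group G]

theorem card_mul_card_inf (A B : Subgroup G) :
    Nat.card ((A : Set G) * (B : Set G) : Set G) * Nat.card (A ⊓ B : Subgroup G) =
      Nat.card A * Nat.card B := by
  have hsmul (a : A) : a • (QuotientGroup.mk 1 : G ⧸ B) = QuotientGroup.mk (a : G) := by
    show (a : G) • (QuotientGroup.mk 1 : G ⧸ B) = _
    rw [MulAction.Quotient.smul_mk, smul_eq_mul, mul_one]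
  have horbit : MulAction.orbit A (QuotientGroup.mk 1 : G ⧸ B) =
      QuotientGroup.mk '' (A : Set G) := by
    ext x
    constructor
    · rintro ⟨a, rfl⟩
      exact ⟨a, a.2, (hsmul a).symm⟩
    · rintro ⟨a, ha, rfl⟩
      exact ⟨⟨a, ha⟩, hsmul _⟩
  have hstab : MulAction.stabilizer A (QuotientGroup.mk 1 : G ⧸ B) = B.subgroupOf A := by
    ext a
    rw [MulAction.mem_stabilizer_iff, hsmul, mem_subgroupOf, QuotientGroup.eq, mul_one,
      inv_mem_iff]
  have hindex := MulAction.index_stabilizer A (QuotientGroup.mk 1 : G ⧸ B)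
  rw [hstab, horbit, ← Nat.card_coe_set_eq] at hindex
  have hrel := relIndex_inf_mul_relIndex ⊥ B A
  rw [relIndex_bot_left, bot_inf_eq, relIndex_bot_left, inf_comm] at hrel
  rw [card_mul_eq_card_subgroup_mul_card_quotient, ← hindex, ← hrel]
  change _ * B.relIndex A * _ = _
  ring

theorem coe_mul_subset_sup (A B : Subgroup G) :
    (A : Set G) * (B : Set G) ⊆ ((A ⊔ B : Subgroup G) : Set G) := by
  rintro _ ⟨a, ha, b, hb, rfl⟩
  exact mul_mem (mem_sup_left ha) (mem_sup_right hb)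

theorem centralizer_sup (A B : Subgroup G) :
    centralizer ((A ⊔ B : Subgroup G) : Set G) = centralizer (A : Set G) ⊓ centralizer B := by
  refine le_antisymm (le_inf (centralizer_le (SetLike.coe_subset_coe.mpr le_sup_left))
    (centralizer_le (SetLike.coe_subset_coe.mpr le_sup_right))) ?_
  rw [← le_centralizer_iff]
  exact sup_le (le_centralizer_iff.mpr inf_le_left) (le_centralizer_iff.mpr inf_le_right)

theorem coe_centralizer_mul_subset_centralizer_inf (A B : Subgroup G) :
    (centralizer (A : Set G) : Set G) * (centralizer (B : Set G) : Set G) ⊆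
      centralizer ((A ⊓ B : Subgroup G) : Set G) := by
  rintro _ ⟨a, ha, b, hb, rfl⟩
  exact mul_mem (centralizer_le inf_le_left ha) (centralizer_le inf_le_right hb)

theorem conj_smul_eq_self_of_coe_mul_eq_univ {H : Subgroup G} {g : G}
    (h : (H : Set G) * ((MulAut.conj g • H : Subgroup G) : Set G) = Set.univ) :
    MulAut.conj g • H = H := by
  obtain ⟨x, hx, y, hy, hxy : x * y = g⁻¹⟩ :
      g⁻¹ ∈ (H : Set G) * ((MulAut.conj g • H : Subgroup G) : Set G) :=
    h ▸ Set.mem_univ _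
  have hg : g = y⁻¹ * x⁻¹ := by rw [← mul_inv_rev, hxy, inv_inv]
  have hconj : MulAut.conj g • H = MulAut.conj y⁻¹ • H := by
    rw [hg, map_mul, mul_smul, conj_smul_eq_self_of_mem (inv_mem hx)]
  rw [hconj] at hy ⊢
  have hyH : y ∈ H := by
    rw [SetLike.mem_coe, mem_pointwise_smul_iff_inv_smul_mem] at hy
    simpa [MulAut.smul_def] using hy
  exact conj_smul_eq_self_of_mem (inv_mem hyH)

end Subgroup

section CDMeasure

open Subgroup

variable {G : Type*} [Group G]

/-- The Chermak–Delgado measure in its usual form `|H| * |C_G(H)|`. -/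
noncomputable def cdCardMeasure (H : Subgroup G) : ℕ :=
  Nat.card H * Nat.card (centralizer (H : Set G))

def IsCDMax (H : Subgroup G) : Prop :=
  ∀ K : Subgroup G, cdCardMeasure K ≤ cdCardMeasure H

theorem cdCardMeasure_le_map {G' : Type*} [Group G'] [Finite G'] {f : G →* G'}
    (hf : Function.Injective f) (H : Subgroup G) : cdCardMeasure H ≤ cdCardMeasure (H.map f) := by
  have hC : (centralizer (H : Set G)).map f ≤ centralizer ((H.map f : Subgroup G') : Set G') :=
    map_centralizer_le_centralizer_image _ _
  rw [cdCardMeasure, cdCardMeasure, ← card_map_of_injective (K := H) hf,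
    ← card_map_of_injective (K := centralizer (H : Set G)) hf]
  exact Nat.mul_le_mul_left _ (card_le_of_le hC)

theorem cdMeasure_mul_cdCardMeasure (H : Subgroup G) :
    cdMeasure H * cdCardMeasure H = Nat.card G * Nat.card G := by
  rw [cdMeasure, cdCardMeasure, mul_mul_mul_comm, index_mul_card, index_mul_card]

variable [Finite G]

theorem cdCardMeasure_pos (H : Subgroup G) : 0 < cdCardMeasure H :=
  Nat.mul_pos Nat.card_pos Nat.card_pos

theorem IsCDSubgroup.isCDMax {H : Subgroup G} (hH : IsCDSubgroup H) : IsCDMax H := by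
  intro K
  have hle : cdMeasure H ≤ cdMeasure K := hH ▸ Nat.sInf_le ⟨K, rfl⟩
  have hpos : 0 < cdMeasure H := Nat.mul_pos (Nat.pos_of_ne_zero index_ne_zero_of_finite)
    (Nat.pos_of_ne_zero index_ne_zero_of_finite)
  refine Nat.le_of_mul_le_mul_left ?_ hpos
  calc cdMeasure H * cdCardMeasure K ≤ cdMeasure K * cdCardMeasure K :=
        Nat.mul_le_mul_right _ hle
    _ = cdMeasure H * cdCardMeasure H := by
      rw [cdMeasure_mul_cdCardMeasure, cdMeasure_mul_cdCardMeasure]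

theorem cdCardMeasure_mul_le (A B : Subgroup G) :
    cdCardMeasure A * cdCardMeasure B ≤
      Nat.card ((A : Set G) * (B : Set G) : Set G) *
        Nat.card (centralizer ((A ⊔ B : Subgroup G) : Set G)) * cdCardMeasure (A ⊓ B) := by
  have hcent := Nat.card_mono (Set.toFinite _) (coe_centralizer_mul_subset_centralizer_inf A B)
  rw [SetLike.coe_sort_coe] at hcent
  calc cdCardMeasure A * cdCardMeasure B
      = (Nat.card A * Nat.card B) *
          (Nat.card (centralizer (A : Set G)) * Nat.card (centralizer (B : Set G))) := by
        rw [cdCardMeasure, cdCardMeasure, mul_mul_mul_comm]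
    _ = _ := by rw [← card_mul_card_inf, ← card_mul_card_inf, ← centralizer_sup]
    _ ≤ _ := by
      rw [cdCardMeasure]
      nlinarith [hcent, Nat.zero_le (Nat.card ((A : Set G) * (B : Set G) : Set G) *
        Nat.card (A ⊓ B : Subgroup G) * Nat.card (centralizer ((A ⊔ B : Subgroup G) : Set G)))]

theorem cdCardMeasure_le_centralizer (H : Subgroup G) :
    cdCardMeasure H ≤ cdCardMeasure (centralizer (H : Set G)) := by
  rw [cdCardMeasure, cdCardMeasure, mul_comm]
  exact Nat.mul_le_mul_left _ (card_le_of_le (le_centralizer_iff.mpr le_rfl))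

theorem cdCardMeasure_le_subgroupOf {H J : Subgroup G} (hHJ : H ≤ J)
    (hCJ : centralizer (H : Set G) ≤ J) : cdCardMeasure H ≤ cdCardMeasure (H.subgroupOf J) := by
  have hC : centralizer (H : Set G) ≤
      (centralizer ((H.subgroupOf J : Subgroup J) : Set J)).map J.subtype :=
    fun x hx => ⟨⟨x, hCJ hx⟩, fun k hk => Subtype.ext (hx k.1 hk), rfl⟩
  rw [cdCardMeasure, cdCardMeasure, Nat.card_congr (subgroupOfEquivOfLe hHJ).toEquiv,
    ← card_map_of_injective (K := centralizer _) J.subtype_injective]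
  exact Nat.mul_le_mul_left _ (card_le_of_le hC)

namespace IsCDMax

variable {H A B : Subgroup G}

theorem centralizer (hH : IsCDMax H) : IsCDMax (centralizer (H : Set G)) :=
  fun K => (hH K).trans (cdCardMeasure_le_centralizer H)

theorem pointwise_smul (hH : IsCDMax H) (e : MulAut G) : IsCDMax (e • H) :=
  fun K => (hH K).trans (cdCardMeasure_le_map (f := e.toMonoidHom) e.injective H)

theorem subgroupOf {J : Subgroup G} (hH : IsCDMax H) (hHJ : H ≤ J)
    (hCJ : Subgroup.centralizer (H : Set G) ≤ J) : IsCDMax (H.subgroupOf J) := fun K =>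
  (cdCardMeasure_le_map J.subtype_injective K).trans
    ((hH _).trans (cdCardMeasure_le_subgroupOf hHJ hCJ))

theorem cdCardMeasure_le_card_mul (hA : IsCDMax A) (hB : IsCDMax B) :
    cdCardMeasure A ≤ Nat.card ((A : Set G) * (B : Set G) : Set G) *
      Nat.card (Subgroup.centralizer ((A ⊔ B : Subgroup G) : Set G)) := by
  have hAB : cdCardMeasure B = cdCardMeasure A := le_antisymm (hA B) (hB A)
  refine Nat.le_of_mul_le_mul_right ?_ (cdCardMeasure_pos A)
  calc cdCardMeasure A * cdCardMeasure A = cdCardMeasure A * cdCardMeasure B := by rw [hAB]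
    _ ≤ _ := cdCardMeasure_mul_le A B
    _ ≤ _ := Nat.mul_le_mul_left _ (hA _)

theorem sup (hA : IsCDMax A) (hB : IsCDMax B) : IsCDMax (A ⊔ B) := fun K =>
  calc cdCardMeasure K ≤ cdCardMeasure A := hA K
    _ ≤ _ := hA.cdCardMeasure_le_card_mul hB
    _ ≤ cdCardMeasure (A ⊔ B) :=
      Nat.mul_le_mul_right _ (Nat.card_mono (Set.toFinite _) (coe_mul_subset_sup A B))

theorem coe_sup (hA : IsCDMax A) (hB : IsCDMax B) :
    ((A ⊔ B : Subgroup G) : Set G) = (A : Set G) * (B : Set G) := by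
  refine (Set.eq_of_subset_of_ncard_le (coe_mul_subset_sup A B) ?_ (Set.toFinite _)).symm
  rw [← Nat.card_coe_set_eq, ← Nat.card_coe_set_eq]
  refine Nat.le_of_mul_le_mul_right ?_
    (Nat.card_pos (α := Subgroup.centralizer ((A ⊔ B : Subgroup G) : Set G)))
  calc _ = cdCardMeasure (A ⊔ B) := rfl
    _ ≤ cdCardMeasure A := hA _
    _ ≤ _ := hA.cdCardMeasure_le_card_mul hB

theorem isSubnormal (hH : IsCDMax H) : H.IsSubnormal := by
  induction hn : Nat.card G using Nat.strong_induction_on generalizing G with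
  | _ n ihCard =>
  induction H using WellFoundedGT.induction with
  | _ H ihSup =>
  by_cases hCH : Subgroup.centralizer (H : Set G) ≤ H
  · by_cases hnormal : ∀ g : G, MulAut.conj g • H = H
    · exact (Normal.of_conjugate_fixed hnormal).isSubnormal
    obtain ⟨g, hg⟩ := not_forall.mp hnormal
    set J := H ⊔ MulAut.conj g • H
    have hJ : IsCDMax J := hH.sup (hH.pointwise_smul _)
    have hlt : H < J := by
      refine lt_of_le_of_ne le_sup_left fun he => hg ?_
      refine eq_of_le_of_card_ge (le_sup_right.trans he.ge) ?_
      exact (card_map_of_injective (MulAut.conj g).injective).ge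
    have hJtop : J ≠ ⊤ := fun htop => hg <| conj_smul_eq_self_of_coe_mul_eq_univ <| by
      rw [← hH.coe_sup (hH.pointwise_smul _)]
      change (J : Set G) = Set.univ
      rw [htop, coe_top]
    have hcard : Nat.card J < n :=
      hn ▸ (card_le_card_group J).lt_of_ne (mt (card_eq_iff_eq_top J).mp hJtop)
    have hHJ : (H.subgroupOf J).IsSubnormal :=
      ihCard _ hcard (hH.subgroupOf le_sup_left (hCH.trans le_sup_left)) rfl
    exact hHJ.trans le_sup_left (ihSup J hlt hJ)
  · set J := H ⊔ Subgroup.centralizer (H : Set G)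
    have hlt : H < J := lt_of_le_of_ne le_sup_left fun he => hCH (le_sup_right.trans he.ge)
    have hnormal : (H.subgroupOf J).Normal :=
      (normal_subgroupOf_iff_le_normalizer le_sup_left).mpr
        (sup_le le_normalizer (centralizer_le_normalizer _))
    exact .step H J le_sup_left (ihSup J hlt (hH.sup hH.centralizer)) hnormal

end IsCDMax

end CDMeasure

theorem Subgroup.IsSubnormal.isSubnormal {G : Type*} [Group G] {H : Subgroup G}
    (hH : H.IsSubnormal) : _root_.IsSubnormal H := by
  obtain ⟨n, f, hmono, hnormal, hf0, hfn⟩ := isSubnormal_iff.mp hH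
  exact ⟨n, f, hf0, hfn, fun i _ => ⟨hmono i.le_succ,
    (normal_subgroupOf_iff_le_normalizer (hmono i.le_succ)).mp (hnormal i)⟩⟩

theorem stmt_6 {G : Type*} [Group G] [Finite G] (H : Subgroup G)
    (hH : IsCDSubgroup H) : IsSubnormal H :=
  hH.isCDMax.isSubnormal.isSubnormal
end

section
/- Let p be a prime and let G be a finite p-group with μ(G) = p⁴. Then either |G:Z(G)| = p⁴, or G contains an abelian subgroup of index at most p². -/
open Pointwise

/-!
The minimum `μ(G) = p⁴` is attained by an abelian subgroup: if `m(G,H)` is minimal then so is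
`m(G, A)` for `A = H ∩ C_G(H)`, which lies in its own centralizer. Since `C_G(A) ≥ A`, the factors
of `|G:A| · |G:C_G(A)| = p⁴` are `p² · p²`, `p³ · p` or `p⁴ · 1`. In the first case `A` has index
`p²`; in the second, adjoining to `A` an element of `C_G(A) \ A` gives a larger abelian subgroup,
of index at most `p²`; in the last, `A` is central, so `|G:Z(G)| ≤ p⁴ = μ(G) ≤ m(G,G) = |G:Z(G)|`.
-/

theorem Nat.exists_prime_pow_of_dvd_of_mul_eq {p a b n : ℕ} (hp : p.Prime) (hba : b ∣ a)
    (hab : a * b = p ^ n) : ∃ i j, i + j = n ∧ j ≤ i ∧ a = p ^ i ∧ b = p ^ j := by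
  obtain ⟨i, -, rfl⟩ := (Nat.dvd_prime_pow hp).1 (Dvd.intro _ hab)
  obtain ⟨j, -, rfl⟩ := (Nat.dvd_prime_pow hp).1 (Dvd.intro_left _ hab)
  exact ⟨i, j, Nat.pow_right_injective hp.two_le (by simp only [pow_add, hab]),
    (Nat.pow_dvd_pow_iff_le_right hp.one_lt).1 hba, rfl, rfl⟩

namespace Subgroup

variable {G : Type*} [Group G]

theorem index_inf_mul_index_sup_le (H K : Subgroup G) [H.FiniteIndex] :
    (H ⊓ K).index * (H ⊔ K).index ≤ H.index * K.index :=
  calc (H ⊓ K).index * (H ⊔ K).index = H.relIndex K * K.index * (H ⊔ K).index := by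
        rw [← inf_relIndex_right, relIndex_mul_index inf_le_right]
    _ ≤ H.relIndex (H ⊔ K) * K.index * (H ⊔ K).index := by
        gcongr
        exact relIndex_le_of_le_right le_sup_right
          isFiniteRelIndex_of_finiteIndex.relIndex_ne_zero
    _ = H.index * K.index := by
        rw [← relIndex_mul_index (le_sup_left : H ≤ H ⊔ K)]; ring

theorem index_le_prime_pow_of_lt {p n : ℕ} (hp : p.Prime) {H K : Subgroup G} (hHK : H < K)
    (hH : H.index = p ^ (n + 1)) : K.index ≤ p ^ n := by
  have : H.FiniteIndex := ⟨by rw [hH]; exact pow_ne_zero _ hp.ne_zero⟩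
  obtain ⟨m, -, hm⟩ := (Nat.dvd_prime_pow hp).1 (hH ▸ index_dvd_of_le hHK.le)
  have hlt : p ^ m < p ^ (n + 1) := hm ▸ hH ▸ index_strictAnti hHK
  rw [hm]
  exact Nat.pow_le_pow_right hp.pos (Nat.lt_succ_iff.1 ((Nat.pow_lt_pow_iff_right hp.one_lt).1 hlt))

theorem exists_isMulCommutative_gt_of_lt_centralizer {A : Subgroup G}
    (hA : A < centralizer (A : Set G)) : ∃ B : Subgroup G, IsMulCommutative B ∧ A < B := by
  obtain ⟨x, hxC, hxA⟩ := SetLike.exists_of_lt hA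
  have hcomm : ∀ y ∈ insert x (A : Set G), ∀ z ∈ insert x (A : Set G), y * z = z * y := by
    rintro y (rfl | hy) z (rfl | hz)
    · rfl
    · exact (mem_centralizer_iff.1 hxC z hz).symm
    · exact mem_centralizer_iff.1 hxC y hy
    · exact mem_centralizer_iff.1 (hA.le hz) y hy
  refine ⟨closure (insert x A), isMulCommutative_closure hcomm,
    SetLike.lt_iff_le_and_exists.2 ⟨fun y hy => subset_closure (Set.mem_insert_of_mem x hy),
      x, subset_closure (Set.mem_insert x _), hxA⟩⟩

end Subgroup

open Subgroup

section ChermakDelgado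

variable {G : Type*} [Group G]

theorem cdMu_le_cdMeasure (H : Subgroup G) : cdMu G ≤ cdMeasure H :=
  Nat.sInf_le ⟨H, rfl⟩

variable (G) in
theorem exists_cdMeasure_eq_cdMu : ∃ H : Subgroup G, cdMeasure H = cdMu G :=
  Nat.sInf_mem (s := {n | ∃ H : Subgroup G, cdMeasure H = n}) ⟨_, ⊤, rfl⟩

theorem cdMeasure_top : cdMeasure (⊤ : Subgroup G) = (center G).index := by
  rw [cdMeasure, index_top, one_mul, coe_top, centralizer_univ]

theorem cdMeasure_inf_centralizer_le [Finite G] (H : Subgroup G) :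
    cdMeasure (H ⊓ centralizer (H : Set G)) ≤ cdMeasure H := by
  set K := centralizer (H : Set G)
  have hsup : H ⊔ K ≤ centralizer ((H ⊓ K : Subgroup G) : Set G) :=
    sup_le (le_centralizer_iff.1 inf_le_right) (centralizer_le inf_le_left)
  calc cdMeasure (H ⊓ K) ≤ (H ⊓ K).index * (H ⊔ K).index :=
        Nat.mul_le_mul_left _ (index_antitone hsup)
    _ ≤ cdMeasure H := index_inf_mul_index_sup_le H K

variable (G) in
theorem exists_le_centralizer_cdMeasure_eq_cdMu [Finite G] :
    ∃ A : Subgroup G, A ≤ centralizer (A : Set G) ∧ cdMeasure A = cdMu G := by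
  obtain ⟨H, hH⟩ := exists_cdMeasure_eq_cdMu G
  refine ⟨H ⊓ centralizer (H : Set G),
    inf_le_right.trans (centralizer_le inf_le_left), le_antisymm ?_ (cdMu_le_cdMeasure _)⟩
  exact hH ▸ cdMeasure_inf_centralizer_le H

end ChermakDelgado

theorem stmt_16_general {G : Type*} [Group G] [Finite G] (p : ℕ) (hp : p.Prime)
    (hmu : cdMu G = p ^ 4) :
    (Subgroup.center G).index = p ^ 4 ∨
      ∃ A : Subgroup G, IsMulCommutative A ∧ A.index ≤ p ^ 2 := by
  obtain ⟨A, hAC, hmA⟩ := exists_le_centralizer_cdMeasure_eq_cdMu G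
  obtain ⟨i, j, hij, hji, hA, hC⟩ :=
    Nat.exists_prime_pow_of_dvd_of_mul_eq hp (index_dvd_of_le hAC) (hmA.trans hmu)
  obtain rfl | rfl | rfl : i = 2 ∨ i = 3 ∨ i = 4 := by omega
  · exact Or.inr ⟨A, le_centralizer_iff_isMulCommutative.1 hAC, hA.le⟩
  · have hlt : A < centralizer (A : Set G) := hAC.lt_of_ne fun h => by
      rw [← h, hA] at hC
      have := Nat.pow_right_injective hp.two_le hC
      omega
    obtain ⟨B, hB, hAB⟩ := exists_isMulCommutative_gt_of_lt_centralizer hlt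
    exact Or.inr ⟨B, hB, index_le_prime_pow_of_lt hp hAB hA⟩
  · obtain rfl : j = 0 := by omega
    have hAZ : A ≤ center G := centralizer_eq_top_iff_subset.1
      (index_eq_one.1 (hC.trans (pow_zero p)))
    refine Or.inl (le_antisymm (hA ▸ index_antitone hAZ) ?_)
    rw [← hmu, ← cdMeasure_top]
    exact cdMu_le_cdMeasure ⊤

theorem stmt_16 {G : Type*} [Group G] [Finite G] (p : ℕ) (hp : p.Prime)
    (hpG : IsPGroup p G) (hmu : cdMu G = p ^ 4) :
    (Subgroup.center G).index = p ^ 4 ∨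
      ∃ A : Subgroup G, IsMulCommutative A ∧ A.index ≤ p ^ 2 :=
  stmt_16_general p hp hmu
end
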